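/- arXiv:2111.05893 — 7 statements merged into one kernel-verified Lean document; each statement's English description precedes it below -/
import Mathlib

section
/- Let G be a group and 𝓕 a generating family on G (a nonempty collection of subsets of G closed under union, pointwise product, and inverse, with ⋃𝓕 = G). For subsets A, B ⊆ G, define A λ_𝓕 B iff there exists H ∈ 𝓕 with A ⊆ BH and B ⊆ AH. Then λ_𝓕 coincides with the asymptotic resemblance relation λ_{𝓔_𝓕} associated to the coarse structure 𝓔_𝓕 = {E ⊆ G×G : E ⊆ G(F×F) for some F ∈ 𝓕}, where G(F×F) = {(ga,gb) : g ∈ G, a,b ∈ F}. -/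
open scoped Pointwise

/-- A generating family on a group `G`: a family of subsets containing a nonempty set,
closed under union, pointwise product and inverse, and covering `G`. -/
def GenFam {G : Type*} [Group G] (𝓕 : Set (Set G)) : Prop :=
  (∃ A ∈ 𝓕, A.Nonempty) ∧
  (∀ A ∈ 𝓕, ∀ B ∈ 𝓕, A ∪ B ∈ 𝓕) ∧
  (∀ A ∈ 𝓕, ∀ B ∈ 𝓕, A * B ∈ 𝓕) ∧
  (∀ A ∈ 𝓕, A⁻¹ ∈ 𝓕) ∧
  ⋃₀ 𝓕 = Set.univ

/-- The asymptotic resemblance relation associated to a generating family. -/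
def lam {G : Type*} [Group G] (𝓕 : Set (Set G)) (A B : Set G) : Prop :=
  ∃ H ∈ 𝓕, A ⊆ B * H ∧ B ⊆ A * H

/-- `G(F × F) = {(g a, g b) : g ∈ G, a, b ∈ F}`. -/
def grpEnt {G : Type*} [Group G] (F : Set G) : Set (G × G) :=
  {p | ∃ g : G, ∃ a ∈ F, ∃ b ∈ F, p = (g * a, g * b)}

/-- The coarse structure associated to a generating family. -/
def EF {G : Type*} [Group G] (𝓕 : Set (Set G)) : Set (Set (G × G)) :=
  {E | ∃ F ∈ 𝓕, E ⊆ grpEnt F}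

/-- `E(A) = {y : ∃ x ∈ A, (y, x) ∈ E}`. -/
def img {G : Type*} (E : Set (G × G)) (A : Set G) : Set G :=
  {y | ∃ x ∈ A, (y, x) ∈ E}

/-- λ_𝓕 coincides with the AS.R associated to the coarse structure 𝓔_𝓕. -/
theorem lam_eq_lam_of_coarse {G : Type*} [Group G] (𝓕 : Set (Set G))
    (h𝓕 : GenFam 𝓕) (A B : Set G) :
    lam 𝓕 A B ↔ ∃ E ∈ EF 𝓕, A ⊆ img E B ∧ B ⊆ img E A := by

  obtain ⟨⟨A₀, hA₀, hA₀ne⟩, hUnion, hMul, hInv, hCover⟩ := h𝓕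
  constructor
  · rintro ⟨H, hH, hAB, hBA⟩
    by_cases hHne : H.Nonempty
    · set K := H ∪ H⁻¹ with hKdef
      have hK : K ∈ 𝓕 := hUnion H hH H⁻¹ (hInv H hH)
      set F := K ∪ K * K with hFdef
      have hF : F ∈ 𝓕 := hUnion K hK (K * K) (hMul K hK K hK)
      have h1 : (1:G) ∈ F := by
        obtain ⟨h, hh⟩ := hHne
        have hinv : h⁻¹ ∈ K := Or.inr (by simpa using hh)
        exact Or.inr ⟨h, Or.inl hh, h⁻¹, hinv, mul_inv_cancel h⟩
      refine ⟨grpEnt F, ⟨F, hF, subset_rfl⟩, ?_, ?_⟩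
      · intro y hy
        obtain ⟨b, hb, h, hh, hbh⟩ := hAB hy
        exact ⟨b, hb, ⟨b, h, Or.inl (Or.inl hh), 1, h1, by simp [hbh]⟩⟩
      · intro y hy
        obtain ⟨a, ha, h, hh, hah⟩ := hBA hy
        exact ⟨a, ha, ⟨a, h, Or.inl (Or.inl hh), 1, h1, by simp [hah]⟩⟩
    · rw [Set.not_nonempty_iff_eq_empty] at hHne
      subst hHne
      have hA : A = ∅ := Set.subset_empty_iff.mp (by simpa using hAB)
      have hB : B = ∅ := Set.subset_empty_iff.mp (by simpa using hBA)
      exact ⟨grpEnt A₀, ⟨A₀, hA₀, subset_rfl⟩, by simp [hA, hB]⟩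
  · rintro ⟨E, ⟨F, hF, hEF⟩, hAE, hBE⟩
    refine ⟨F⁻¹ * F, hMul F⁻¹ (hInv F hF) F hF, ?_, ?_⟩
    · intro y hy
      obtain ⟨x, hx, hxy⟩ := hAE hy
      obtain ⟨g, a, ha, b, hb, heq⟩ := hEF hxy
      have h1 : y = g * a := congrArg Prod.fst heq
      have h2 : x = g * b := congrArg Prod.snd heq
      refine ⟨x, hx, b⁻¹ * a, ⟨b⁻¹, Set.inv_mem_inv.mpr hb, a, ha, rfl⟩, ?_⟩
      rw [h1, h2]; group
    · intro y hy
      obtain ⟨x, hx, hxy⟩ := hBE hy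
      obtain ⟨g, a, ha, b, hb, heq⟩ := hEF hxy
      have h1 : y = g * a := congrArg Prod.fst heq
      have h2 : x = g * b := congrArg Prod.snd heq
      refine ⟨x, hx, b⁻¹ * a, ⟨b⁻¹, Set.inv_mem_inv.mpr hb, a, ha, rfl⟩, ?_⟩
      rw [h1, h2]; group
end

section
/- The group compact coarse structure 𝓔_𝓚 on a Hausdorff topological group G is compatible with the topology of G if and only if G is locally compact. -/
open scoped Pointwise

/-- The group compact generating family: relatively compact subsets. -/
def relCpt (G : Type*) [TopologicalSpace G] : Set (Set G) :=
  {A | IsCompact (closure A)}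

/-!
An entourage `E ⊆ G(F × F)` that is open and contains the diagonal has an open slice
`{y | (1, y) ∈ E}` around `1`, contained in `F⁻¹ F`; so a relatively compact `F` gives a
relatively compact neighbourhood of `1`, which makes `G` locally compact. Conversely, if `U` is a
relatively compact open neighbourhood of `1`, then `{(x, y) | x⁻¹ y ∈ U}` is an open entourage
containing the diagonal, and it lies in `G(U × U)` because `(x, y) = (x · 1, x · x⁻¹y)`.
-/

open Topology

section grpEnt

variable {G : Type*} [Group G] {F : Set G}

theorem inv_mul_mem_of_mem_grpEnt {p : G × G} (hp : p ∈ grpEnt F) : p.1⁻¹ * p.2 ∈ F⁻¹ * F := by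
  obtain ⟨g, a, ha, b, hb, rfl⟩ := hp
  exact ⟨a⁻¹, Set.inv_mem_inv.mpr ha, b, hb, by group⟩

theorem setOf_inv_mul_mem_subset_grpEnt (h1 : (1 : G) ∈ F) :
    {p : G × G | p.1⁻¹ * p.2 ∈ F} ⊆ grpEnt F := by
  rintro ⟨x, y⟩ hxy
  exact ⟨x, 1, h1, x⁻¹ * y, hxy, by simp⟩

end grpEnt

section relCpt

variable {G : Type*}

theorem relCpt_of_subset [TopologicalSpace G] {A B : Set G} (hAB : A ⊆ B)
    (hB : B ∈ relCpt G) : A ∈ relCpt G :=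
  hB.of_isClosed_subset isClosed_closure (closure_mono hAB)

variable [Group G] [TopologicalSpace G] [IsTopologicalGroup G]

theorem inv_mul_self_mem_relCpt {F : Set G} (hF : F ∈ relCpt G) : F⁻¹ * F ∈ relCpt G :=
  (hF.inv.mul hF).closure_of_subset
    (Set.mul_subset_mul (Set.inv_subset_inv.mpr subset_closure) subset_closure)

theorem locallyCompactSpace_iff_exists_relCpt_mem_nhds_one :
    LocallyCompactSpace G ↔ ∃ U ∈ relCpt G, U ∈ 𝓝 (1 : G) := by
  constructor
  · intro _
    obtain ⟨K, hK, hK1⟩ := exists_compact_mem_nhds (1 : G)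
    exact ⟨K, hK.closure_of_subset subset_rfl, hK1⟩
  · rintro ⟨U, hU, hU1⟩
    exact hU.locallyCompactSpace_of_mem_nhds_of_group (Filter.mem_of_superset hU1 subset_closure)

end relCpt

theorem groupCompact_compatible_iff_general {G : Type*} [Group G] [TopologicalSpace G]
    [IsTopologicalGroup G] :
    (∃ E ∈ EF (relCpt G), IsOpen E ∧ ∀ x : G, (x, x) ∈ E) ↔
      LocallyCompactSpace G := by
  rw [locallyCompactSpace_iff_exists_relCpt_mem_nhds_one]
  constructor
  · rintro ⟨E, ⟨F, hF, hEF⟩, hE, hdiag⟩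
    have hslice : {y : G | (1, y) ∈ E} ∈ 𝓝 (1 : G) :=
      (hE.preimage (Continuous.prodMk_right 1)).mem_nhds (hdiag 1)
    have hsub : {y : G | (1, y) ∈ E} ⊆ F⁻¹ * F := fun y hy ↦ by
      simpa using inv_mul_mem_of_mem_grpEnt (hEF hy)
    exact ⟨_, relCpt_of_subset hsub (inv_mul_self_mem_relCpt hF), hslice⟩
  · rintro ⟨U, hU, hU1⟩
    have h1 : (1 : G) ∈ interior U := mem_interior_iff_mem_nhds.mpr hU1
    refine ⟨{p : G × G | p.1⁻¹ * p.2 ∈ interior U},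
      ⟨interior U, relCpt_of_subset interior_subset hU, setOf_inv_mul_mem_subset_grpEnt h1⟩,
      isOpen_interior.preimage (by fun_prop), fun x ↦ by simpa using h1⟩

/-- The group compact coarse structure on a Hausdorff topological group is
compatible with the topology iff the group is locally compact. -/
theorem groupCompact_compatible_iff {G : Type*} [Group G] [TopologicalSpace G]
    [IsTopologicalGroup G] [T2Space G] :
    (∃ E ∈ EF (relCpt G), IsOpen E ∧ ∀ x : G, (x, x) ∈ E) ↔
      LocallyCompactSpace G :=
  groupCompact_compatible_iff_general
end

section
/- Consider the additive group ℝ with the discrete topology, so the group compact generating family consists of finite sets. Then the AS.R λ on ℝ given by A λ B iff ∃ finite H, A ⊆ B+H ∧ B ⊆ A+H is not asymptotically normal: the sets A = [0,∞) and B = {-n : n ∈ ℕ} are asymptotically disjoint, but there is no decomposition ℝ = X₁ ∪ X₂ with X₁ asymptotically disjoint from A and X₂ asymptotically disjoint from B. -/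
open scoped Pointwise

/-- In the additive group ℝ with the discrete topology, the group compact
generating family consists of the finite sets; `A λ B` iff `A ⊆ B + H` and
`B ⊆ A + H` for some finite `H`. -/
def lamFin (A B : Set ℝ) : Prop :=
  ∃ H : Set ℝ, H.Finite ∧ A ⊆ B + H ∧ B ⊆ A + H

/-- Boundedness: empty or asymptotically alike a singleton (equivalently, finite). -/
def IsBddFin (L : Set ℝ) : Prop :=
  L = ∅ ∨ ∃ x : ℝ, lamFin L {x}

/-- Asymptotic disjointness for this AS.R. -/
def AsympDisjFin (A B : Set ℝ) : Prop :=
  ∀ L₁ ⊆ A, ∀ L₂ ⊆ B, lamFin L₁ L₂ → IsBddFin L₁ ∧ IsBddFin L₂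

lemma isBddFin_of_finite {L : Set ℝ} (h : L.Finite) : IsBddFin L := by
  rcases L.eq_empty_or_nonempty with rfl | ⟨a, ha⟩
  · exact Or.inl rfl
  · refine Or.inr ⟨0, L ∪ (Neg.neg '' L), h.union (h.image _), ?_, ?_⟩
    · intro x hx
      exact ⟨0, rfl, x, Or.inl hx, by ring⟩
    · intro x hx
      rcases hx with rfl
      exact ⟨a, ha, -a, Or.inr ⟨a, ha, rfl⟩, by ring⟩

lemma finite_of_isBddFin {L : Set ℝ} (h : IsBddFin L) : L.Finite := by
  rcases h with rfl | ⟨x, H, hH, h1, _⟩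
  · exact Set.finite_empty
  · exact (((Set.finite_singleton x).add hH).subset h1)

/-- Key: if `X` is asymptotically disjoint from `Y`, `L ⊆ X`, and `L - c ⊆ Y`,
then `L` is finite. -/
lemma key {X Y : Set ℝ} (hd : AsympDisjFin X Y) {L : Set ℝ} (hLX : L ⊆ X)
    (c : ℝ) (hLY : ∀ x ∈ L, x - c ∈ Y) : L.Finite := by
  have h := hd L hLX ((fun x => x - c) '' L) (by rintro _ ⟨x, hx, rfl⟩; exact hLY x hx)
    ⟨{c, -c}, Set.Finite.insert c (Set.finite_singleton (-c)), ?_, ?_⟩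
  · exact finite_of_isBddFin h.1
  · intro x hx
    exact ⟨x - c, ⟨x, hx, rfl⟩, c, Or.inl rfl, by ring⟩
  · rintro _ ⟨x, hx, rfl⟩
    exact ⟨x, hx, -c, Or.inr rfl, by ring⟩

/-- The group compact AS.R on discrete ℝ is not asymptotically normal:
`A = [0, ∞)` and `B = {-n : n ∈ ℕ}` are asymptotically disjoint, but there is no
decomposition `ℝ = X₁ ∪ X₂` with `X₁` asymptotically disjoint from `A` and `X₂`
asymptotically disjoint from `B`. -/
theorem discrete_real_not_asymptotically_normal :
    AsympDisjFin (Set.Ici (0 : ℝ)) {x : ℝ | ∃ n : ℕ, x = -(n + 1 : ℝ)} ∧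
      ¬ ∃ X₁ X₂ : Set ℝ, X₁ ∪ X₂ = Set.univ ∧
          AsympDisjFin X₁ (Set.Ici (0 : ℝ)) ∧
          AsympDisjFin X₂ {x : ℝ | ∃ n : ℕ, x = -(n + 1 : ℝ)} := by
  set B : Set ℝ := {x : ℝ | ∃ n : ℕ, x = -(n + 1 : ℝ)} with hB
  constructor
  · -- A and B are asymptotically disjoint
    rintro L₁ hL₁ L₂ hL₂ ⟨H, hH, h1, h2⟩
    have hfin1 : L₁.Finite := by
      have : L₁ ⊆ ⋃ h ∈ H, {x : ℝ | 0 ≤ x ∧ ∃ n : ℕ, x = -(n + 1 : ℝ) + h} := by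
        intro x hx
        rcases h1 hx with ⟨b, hb, h, hh, rfl⟩
        rcases hL₂ hb with ⟨n, rfl⟩
        exact Set.mem_biUnion hh ⟨hL₁ hx, n, rfl⟩
      refine Set.Finite.subset (Set.Finite.biUnion hH fun h _ => ?_) this
      have : {x : ℝ | 0 ≤ x ∧ ∃ n : ℕ, x = -(n + 1 : ℝ) + h} ⊆
          (fun n : ℕ => -(n + 1 : ℝ) + h) '' (Set.Iic ⌈h⌉₊) := by
        rintro x ⟨hx0, n, rfl⟩
        refine ⟨n, ?_, rfl⟩
        have hn : (n : ℝ) ≤ h := by linarith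
        have : (n : ℝ) ≤ (⌈h⌉₊ : ℝ) := le_trans hn (Nat.le_ceil h)
        exact_mod_cast this
      exact ((Set.finite_Iic _).image _).subset this
    refine ⟨isBddFin_of_finite hfin1, isBddFin_of_finite ((hfin1.add hH).subset h2)⟩
  · -- no separation
    rintro ⟨X₁, X₂, hcover, hd1, hd2⟩
    -- X₁ is countable
    have hX1m : ∀ m : ℕ, (X₁ ∩ Set.Ici (-(m : ℝ))).Finite := by
      intro m
      refine key hd1 Set.inter_subset_left (-(m : ℝ)) ?_
      rintro x ⟨-, hx⟩
      simp only [Set.mem_Ici] at hx ⊢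
      linarith
    have hX1count : X₁.Countable := by
      have : X₁ ⊆ ⋃ m : ℕ, X₁ ∩ Set.Ici (-(m : ℝ)) := by
        intro x hx
        obtain ⟨m, hm⟩ := exists_nat_ge (-x)
        exact Set.mem_iUnion.mpr ⟨m, hx, by simpa [Set.mem_Ici] using neg_le.mp hm⟩
      exact (Set.countable_iUnion fun m => (hX1m m).countable).mono this
    -- for each t, some t - (n+1) lies in X₁
    have hex : ∀ t : ℝ, ∃ n : ℕ, t - (n + 1 : ℝ) ∈ X₁ := by
      intro t
      by_contra hno
      push_neg at hno
      have hsub : Set.range (fun n : ℕ => t - (n + 1 : ℝ)) ⊆ X₂ := by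
        rintro _ ⟨n, rfl⟩
        have := Set.eq_univ_iff_forall.mp hcover (t - (n + 1 : ℝ))
        rcases this with h | h
        · exact absurd h (hno n)
        · exact h
      have hfin : (Set.range (fun n : ℕ => t - (n + 1 : ℝ))).Finite := by
        refine key hd2 hsub t ?_
        rintro _ ⟨n, rfl⟩
        exact ⟨n, by ring⟩
      have hinj : Function.Injective (fun n : ℕ => t - (n + 1 : ℝ)) := by
        intro a b hab
        simp only at hab
        have : (a : ℝ) = b := by linarith
        exact_mod_cast this
      exact Set.infinite_range_of_injective hinj hfin
    choose f hf using hex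
    set g : ℝ → ℝ := fun t => t - (f t + 1 : ℝ) with hg
    have hmaps : Set.MapsTo g (Set.Ico (0 : ℝ) 1) X₁ := fun t _ => hf t
    have hinj : Set.InjOn g (Set.Ico (0 : ℝ) 1) := by
      rintro s ⟨hs0, hs1⟩ t ⟨ht0, ht1⟩ hst
      have heq : s - t = (f s : ℝ) - (f t : ℝ) := by
        simp only [hg] at hst; linarith
      have hft : f s = f t := by
        rcases lt_trichotomy (f s) (f t) with h | h | h
        · have : (f s : ℝ) + 1 ≤ (f t : ℝ) := by exact_mod_cast h
          linarith
        · exact h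
        · have : (f t : ℝ) + 1 ≤ (f s : ℝ) := by exact_mod_cast h
          linarith
      have : (f s : ℝ) = (f t : ℝ) := by exact_mod_cast hft
      linarith
    have : (Set.Ico (0 : ℝ) 1).Countable := hmaps.countable_of_injOn hinj hX1count
    have h1 := this.le_aleph0
    rw [Cardinal.mk_Ico_real (by norm_num : (0:ℝ) < 1)] at h1
    exact absurd h1 (not_le.mpr Cardinal.aleph0_lt_continuum)
end

section
/- Let G be a group with generating family 𝓕, and suppose G is H-convex for some H ∈ 𝓕. Then every asymptotic cut between two asymptotically disjoint subsets A, B of (G, 𝓔_𝓕) is a large scale separator between A and B in (G, λ_𝓕). -/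
open scoped Pointwise

/-- `G` is `H`-convex: `H ∈ 𝓕` generates `G` and every `K ∈ 𝓕` is contained in
some power `Hⁿ`. -/
def HConvex {G : Type*} [Group G] (𝓕 : Set (Set G)) (H : Set G) : Prop :=
  H ∈ 𝓕 ∧ Subgroup.closure H = ⊤ ∧ ∀ K ∈ 𝓕, ∃ n : ℕ, 0 < n ∧ K ⊆ H ^ n

/-- Bounded sets: elements of `𝓕̂`. -/
def BddF {G : Type*} [Group G] (𝓕 : Set (Set G)) (L : Set G) : Prop :=
  ∃ F ∈ 𝓕, L ⊆ F

/-- Asymptotic disjointness in `(G, λ_𝓕)`. -/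
def AsympDisjF {G : Type*} [Group G] (𝓕 : Set (Set G)) (A B : Set G) : Prop :=
  ∀ L₁ ⊆ A, ∀ L₂ ⊆ B, lam 𝓕 L₁ L₂ → BddF 𝓕 L₁ ∧ BddF 𝓕 L₂

/-- `C` is an asymptotic cut between `A` and `B`: it is asymptotically disjoint
from both and for every `K ∈ 𝓕` there is `K' ∈ 𝓕` such that every `K`-chain
from `A` to `B` meets `C K'`. -/
def AsympCutF {G : Type*} [Group G] (𝓕 : Set (Set G)) (A B C : Set G) : Prop :=
  AsympDisjF 𝓕 C A ∧ AsympDisjF 𝓕 C B ∧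
  ∀ K ∈ 𝓕, ∃ K' ∈ 𝓕, ∀ (n : ℕ) (g : ℕ → G), g 0 ∈ A → g n ∈ B →
    (∀ i < n, g (i + 1) ∈ {g i} * K) → ∃ i ≤ n, g i ∈ C * K'

/-- `C` is a large scale separator between `A` and `B`. -/
def LargeScaleSepF {G : Type*} [Group G] (𝓕 : Set (Set G)) (A B C : Set G) : Prop :=
  AsympDisjF 𝓕 C A ∧ AsympDisjF 𝓕 C B ∧
  ∃ X₁ X₂ : Set G, X₁ ∪ X₂ = Set.univ ∧
    AsympDisjF 𝓕 X₁ A ∧ AsympDisjF 𝓕 X₂ B ∧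
    ∀ L₁ ⊆ X₁, ∀ L₂ ⊆ X₂, lam 𝓕 L₁ L₂ → ∃ L ⊆ C, lam 𝓕 L₁ L


lemma mem_singleton_mul' {G : Type*} [Group G] {a b : G} {s : Set G} :
    b ∈ ({a} : Set G) * s ↔ ∃ t ∈ s, b = a * t := by
  constructor
  · intro h
    obtain ⟨p, hp, q, hq, hpq⟩ := Set.mem_mul.mp h
    rw [Set.mem_singleton_iff] at hp
    exact ⟨q, hq, by rw [← hpq, hp]⟩
  · rintro ⟨t, ht, rfl⟩
    exact Set.mem_mul.mpr ⟨a, rfl, t, ht, rfl⟩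

lemma chain_tail {G : Type*} [Group G] (T : Set G) (g : ℕ → G) (N : ℕ)
    (hstep : ∀ i < N, g (i + 1) ∈ ({g i} : Set G) * T) :
    ∀ (d i : ℕ), i + d ≤ N → g (i + d) ∈ ({g i} : Set G) * T ^ d := by
  intro d
  induction d with
  | zero => intro i _; simp
  | succ d ih =>
    intro i hi
    have h1 : g (i + d) ∈ ({g i} : Set G) * T ^ d := ih i (by omega)
    have h2 : g (i + d + 1) ∈ ({g (i + d)} : Set G) * T := hstep (i + d) (by omega)
    obtain ⟨p, hp, hp'⟩ := mem_singleton_mul'.mp h1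
    obtain ⟨t, ht, ht'⟩ := mem_singleton_mul'.mp h2
    have : g (i + (d + 1)) = g i * (p * t) := by
      rw [show i + (d+1) = i + d + 1 by omega, ht', hp', mul_assoc]
    rw [pow_succ]
    exact mem_singleton_mul'.mpr ⟨p * t, Set.mul_mem_mul hp ht, this⟩

lemma chain_of_mem_pow {G : Type*} [Group G] (T : Set G) :
    ∀ (n : ℕ) (x y : G), y ∈ ({x} : Set G) * T ^ n →
      ∃ g : ℕ → G, g 0 = x ∧ g n = y ∧ ∀ i < n, g (i + 1) ∈ ({g i} : Set G) * T := by
  intro n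
  induction n with
  | zero =>
    intro x y hy
    simp only [pow_zero, mul_one, Set.mem_singleton_iff] at hy
    exact ⟨fun _ => x, rfl, hy.symm, by omega⟩
  | succ n ih =>
    intro x y hy
    rw [pow_succ, ← mul_assoc] at hy
    obtain ⟨z, hz, t, ht, hzt⟩ := Set.mem_mul.mp hy
    obtain ⟨g, hg0, hgn, hgstep⟩ := ih x z hz
    refine ⟨fun i => if i ≤ n then g i else y, by simp [hg0], by simp, ?_⟩
    intro i hi
    by_cases h : i + 1 ≤ n
    · simpa [h, show i ≤ n by omega] using hgstep i (by omega)
    · have hin : i = n := by omega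
      subst hin
      simp only [show ¬ (i + 1 ≤ i) by omega, if_neg, le_refl, if_pos, hgn]
      exact mem_singleton_mul'.mpr ⟨t, ht, hzt.symm⟩

lemma chain_append {G : Type*} [Group G] (T : Set G) (g : ℕ → G) (n : ℕ)
    (hg : ∀ i < n, g (i + 1) ∈ ({g i} : Set G) * T) (m : ℕ) (x : G)
    (hx : x ∈ ({g n} : Set G) * T ^ m) :
    ∃ f : ℕ → G, (∀ i ≤ n, f i = g i) ∧ f (n + m) = x ∧
      ∀ i < n + m, f (i + 1) ∈ ({f i} : Set G) * T := by
  obtain ⟨h, hh0, hhm, hhstep⟩ := chain_of_mem_pow T m (g n) x hx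
  refine ⟨fun i => if i ≤ n then g i else h (i - n), fun i hi => by simp [hi], ?_, ?_⟩
  · by_cases hm : m = 0
    · subst hm
      simp only [Nat.add_zero, le_refl, if_pos]
      rw [← hhm, hh0]
    · simp only [show ¬ (n + m ≤ n) by omega, if_neg]
      simp [show n + m - n = m by omega, hhm]
  · intro i hi
    by_cases h1 : i + 1 ≤ n
    · simpa [h1, show i ≤ n by omega] using hg i (by omega)
    · have hfi : (if i ≤ n then g i else h (i - n)) = h (i - n) := by
        by_cases h2 : i ≤ n
        · have : i = n := by omega
          subst this
          simp [hh0]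
        · simp [h2]
      simp only [show ¬ (i + 1 ≤ n) by omega, if_neg, hfi]
      have := hhstep (i - n) (by omega)
      rwa [show i - n + 1 = i + 1 - n by omega] at this

/-- If `G` is `H`-convex for some `H ∈ 𝓕`, then every asymptotic cut between two
asymptotically disjoint subsets is a large scale separator between them. -/
theorem asympCut_isLargeScaleSep {G : Type*} [Group G] (𝓕 : Set (Set G))
    (h𝓕 : GenFam 𝓕) (H : Set G) (hH : HConvex 𝓕 H) (A B C : Set G)
    (hAB : AsympDisjF 𝓕 A B) (hC : AsympCutF 𝓕 A B C) :
    LargeScaleSepF 𝓕 A B C := by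
  obtain ⟨⟨A₀, hA₀F, hA₀ne⟩, hUn, hMulF, hInvF, -⟩ := h𝓕
  obtain ⟨hHF, -, hconv⟩ := hH
  obtain ⟨hCA, hCB, hcutF⟩ := hC
  -- H is nonempty
  have hHne : H.Nonempty := by
    rcases Set.eq_empty_or_nonempty H with h | h
    · exfalso
      obtain ⟨n₀, hn₀, hsub⟩ := hconv A₀ hA₀F
      obtain ⟨a, ha⟩ := hA₀ne
      have := hsub ha
      rw [h, Set.empty_pow (by omega)] at this
      exact this
    · exact h
  -- the basic symmetric set T with 1 ∈ T
  set E : Set G := H ∪ H⁻¹ with hE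
  have hEF : E ∈ 𝓕 := hUn H hHF H⁻¹ (hInvF H hHF)
  set T : Set G := E ∪ E * E with hTdef
  have hTF : T ∈ 𝓕 := hUn E hEF (E * E) (hMulF E hEF E hEF)
  have hT1 : (1 : G) ∈ T := by
    obtain ⟨h, hh⟩ := hHne
    have h1 : h ∈ E := Or.inl hh
    have h2 : h⁻¹ ∈ E := Or.inr (by simpa using hh)
    exact Or.inr (by simpa using Set.mul_mem_mul h1 h2)
  have hHT : H ⊆ T := fun x hx => Or.inl (Or.inl hx)
  -- every K ∈ 𝓕 is inside some positive power of T
  have hKT : ∀ K ∈ 𝓕, ∃ m : ℕ, 0 < m ∧ K ⊆ T ^ m := by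
    intro K hK
    obtain ⟨n, hn, hsub⟩ := hconv K hK
    exact ⟨n, hn, hsub.trans (Set.pow_subset_pow_left hHT)⟩
  -- positive powers of T belong to 𝓕
  have hTpow : ∀ m : ℕ, 0 < m → T ^ m ∈ 𝓕 := by
    intro m hm
    induction m with
    | zero => omega
    | succ k ih =>
      rcases Nat.eq_zero_or_pos k with hk | hk
      · subst hk; simpa using hTF
      · rw [pow_succ]; exact hMulF _ (ih hk) T hTF
  -- the cut constant for T
  obtain ⟨K', hK'F, hcut⟩ := hcutF T hTF
  set D : Set G := C * K' with hD
  -- X₂ : points reachable from A by T-chains avoiding D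
  set X₂ : Set G := {x | ∃ (n : ℕ) (g : ℕ → G), g 0 ∈ A ∧ g n = x ∧
      (∀ i < n, g (i + 1) ∈ ({g i} : Set G) * T) ∧ ∀ i ≤ n, g i ∉ D} with hX₂
  -- key lemma
  have key : ∀ y ∈ X₂, ∀ (m : ℕ) (x : G), x ∈ ({y} : Set G) * T ^ m →
      (x ∉ X₂ ∨ x ∈ B) → x ∈ D * T ^ m := by
    rintro y ⟨n, g, hg0, hgn, hgstep, hgav⟩ m x hx hcase
    rw [← hgn] at hx
    obtain ⟨f, hfg, hfx, hfstep⟩ := chain_append T g n hgstep m x hx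
    have hf0 : f 0 ∈ A := by rw [hfg 0 (Nat.zero_le n)]; exact hg0
    have hav : ∀ i ≤ n, f i ∉ D := fun i hi => (hfg i hi) ▸ hgav i hi
    have hex : ∃ j ≤ n + m, f j ∈ D := by
      rcases hcase with h | h
      · by_contra hall
        push_neg at hall
        exact h ⟨n + m, f, hf0, hfx, hfstep, fun i hi => hall i hi⟩
      · exact hcut (n + m) f hf0 (by rw [hfx]; exact h) hfstep
    obtain ⟨j, hj, hjD⟩ := hex
    have hjn : n < j := lt_of_not_ge fun hle => hav j hle hjD
    have htail : f (j + (n + m - j)) ∈ ({f j} : Set G) * T ^ (n + m - j) :=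
      chain_tail T f (n + m) hfstep (n + m - j) j (by omega)
    rw [show j + (n + m - j) = n + m by omega, hfx] at htail
    exact Set.mul_subset_mul (Set.singleton_subset_iff.mpr hjD)
      (Set.pow_subset_pow_right hT1 (by omega)) htail
  -- every point of A is in X₂ or in D
  have hAX : ∀ a ∈ A, a ∈ X₂ ∨ a ∈ D := by
    intro a ha
    by_cases haD : a ∈ D
    · exact Or.inr haD
    · exact Or.inl ⟨0, fun _ => a, ha, rfl, by omega,
        fun i hi => by simpa using haD⟩
  -- the "near C" lemma
  have near : ∀ (L' N : Set G), N ∈ 𝓕 → L' ⊆ C * N → ∃ L ⊆ C, lam 𝓕 L' L := by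
    intro L' N hN hsub
    refine ⟨C ∩ (L' * N⁻¹), Set.inter_subset_left,
      N ∪ N⁻¹, hUn N hN N⁻¹ (hInvF N hN), ?_, ?_⟩
    · intro x hx
      obtain ⟨c, hcC, ν, hν, hcν⟩ := Set.mem_mul.mp (hsub hx)
      have hc2 : c ∈ L' * N⁻¹ :=
        Set.mem_mul.mpr ⟨x, hx, ν⁻¹, by simpa using hν, by rw [← hcν]; group⟩
      exact Set.mem_mul.mpr ⟨c, ⟨hcC, hc2⟩, ν, Or.inl hν, hcν⟩
    · exact (Set.inter_subset_right).trans
        (Set.mul_subset_mul Set.Subset.rfl Set.subset_union_right)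
  -- boundedness via near + asymptotic disjointness from C
  have bdd : ∀ (L' Y : Set G), AsympDisjF 𝓕 C Y → L' ⊆ Y →
      ∀ N ∈ 𝓕, L' ⊆ C * N → BddF 𝓕 L' := by
    intro L' Y hdisj hLY N hN hsub
    obtain ⟨L, hLC, W, hW, h1, h2⟩ := near L' N hN hsub
    exact (hdisj L hLC L' hLY ⟨W, hW, h2, h1⟩).2
  refine ⟨hCA, hCB, X₂ᶜ, X₂, Set.compl_union_self X₂, ?_, ?_, ?_⟩
  · -- X₂ᶜ is asymptotically disjoint from A
    rintro L₁ hL₁ L₂ hL₂ ⟨M, hM, h12, h21⟩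
    obtain ⟨m, hm, hMT⟩ := hKT M hM
    have hL₁D : L₁ ⊆ D * T ^ m := by
      intro x hx
      obtain ⟨a, haL₂, μ, hμ, hxa⟩ := Set.mem_mul.mp (h12 hx)
      have hxT : x ∈ ({a} : Set G) * T ^ m :=
        mem_singleton_mul'.mpr ⟨μ, hMT hμ, hxa.symm⟩
      rcases hAX a (hL₂ haL₂) with haX₂ | haD
      · exact key a haX₂ m x hxT (Or.inl (hL₁ hx))
      · exact Set.mul_subset_mul (Set.singleton_subset_iff.mpr haD)
          Set.Subset.rfl hxT
    have hL₂D : L₂ ⊆ C * (K' * T ^ m * M) := by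
      have : L₂ ⊆ D * T ^ m * M :=
        h21.trans (Set.mul_subset_mul hL₁D Set.Subset.rfl)
      rwa [hD, mul_assoc, mul_assoc, ← mul_assoc K'] at this
    have hNF : K' * T ^ m * M ∈ 𝓕 := hMulF _ (hMulF K' hK'F _ (hTpow m hm)) M hM
    obtain ⟨F, hF, hLF⟩ := bdd L₂ A hCA hL₂ _ hNF hL₂D
    exact ⟨⟨F * M, hMulF F hF M hM,
      h12.trans (Set.mul_subset_mul hLF Set.Subset.rfl)⟩, ⟨F, hF, hLF⟩⟩
  · -- X₂ is asymptotically disjoint from B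
    rintro L₁ hL₁ L₂ hL₂ ⟨M, hM, h12, h21⟩
    obtain ⟨m, hm, hMT⟩ := hKT M hM
    have hL₂D : L₂ ⊆ C * (K' * T ^ m) := by
      intro b hb
      obtain ⟨y, hyL₁, μ, hμ, hby⟩ := Set.mem_mul.mp (h21 hb)
      have hbT : b ∈ ({y} : Set G) * T ^ m :=
        mem_singleton_mul'.mpr ⟨μ, hMT hμ, hby.symm⟩
      have := key y (hL₁ hyL₁) m b hbT (Or.inr (hL₂ hb))
      rwa [hD, mul_assoc] at this
    have hNF : K' * T ^ m ∈ 𝓕 := hMulF K' hK'F _ (hTpow m hm)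
    obtain ⟨F, hF, hLF⟩ := bdd L₂ B hCB hL₂ _ hNF hL₂D
    exact ⟨⟨F * M, hMulF F hF M hM,
      h12.trans (Set.mul_subset_mul hLF Set.Subset.rfl)⟩, ⟨F, hF, hLF⟩⟩
  · -- the separation property
    rintro L₁ hL₁ L₂ hL₂ ⟨M, hM, h12, h21⟩
    obtain ⟨m, hm, hMT⟩ := hKT M hM
    have hL₁D : L₁ ⊆ C * (K' * T ^ m) := by
      intro x hx
      obtain ⟨y, hyL₂, μ, hμ, hxy⟩ := Set.mem_mul.mp (h12 hx)
      have hxT : x ∈ ({y} : Set G) * T ^ m :=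
        mem_singleton_mul'.mpr ⟨μ, hMT hμ, hxy.symm⟩
      have := key y (hL₂ hyL₂) m x hxT (Or.inl (hL₁ hx))
      rwa [hD, mul_assoc] at this
    exact near L₁ (K' * T ^ m) (hMulF K' hK'F _ (hTpow m hm)) hL₁D
end

section
/- In ℚ × ℚ (additive, discrete topology, finite sets as generating family), let pₙ be the n-th prime, A = {(n + 1/pₙ, 0) : n ∈ ℕ} and B = {(0, n) : n ∈ ℕ}. Then A and B are asymptotically disjoint, i.e., for each finite F ⊆ ℚ×ℚ, the set (A + F) ∩ B is finite. -/
open scoped Pointwise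

/-- `A = {(n + 1/pₙ, 0) : n ∈ ℕ}` where `pₙ` is the `n`-th prime. -/
def Aset : Set (ℚ × ℚ) :=
  {x | ∃ n : ℕ, x = ((n + 1 : ℚ) + (Nat.nth Nat.Prime n : ℚ)⁻¹, 0)}

/-- `B = {(0, n) : n ∈ ℕ}`. -/
def Bset : Set (ℚ × ℚ) :=
  {x | ∃ n : ℕ, x = (0, (n + 1 : ℚ))}

/-- In `ℚ × ℚ` with the generating family of finite subsets, the sets `A` and
`B` are asymptotically disjoint: `(A + F) ∩ B` is finite for every finite `F`. -/
theorem Aset_Bset_asympDisjoint :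
    ∀ F : Set (ℚ × ℚ), F.Finite → ((Aset + F) ∩ Bset).Finite := by
  intro F hF
  apply (hF.image (fun f => ((0 : ℚ), f.2))).subset
  rintro x ⟨⟨a, ha, f, hf, rfl⟩, m, hm⟩
  obtain ⟨n, rfl⟩ := ha
  refine ⟨f, hf, ?_⟩
  have h1 : ((n + 1 : ℚ) + (Nat.nth Nat.Prime n : ℚ)⁻¹ + f.1) = 0 := congrArg Prod.fst hm
  ext
  · simpa using h1.symm
  · simp
end

section
/- Let G, H be groups with generating families 𝓕, 𝓛 respectively such that the associated coarse structures are connected. If (G, λ_𝓕) and (H, λ_𝓛) admit a set theoretic coupling, then they are asymptotically equivalent. -/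
open scoped Pointwise

/-- `A` belongs to `𝓕̂`: it is contained in some member of `𝓕`. -/
def InHat {G : Type*} (𝓕 : Set (Set G)) (A : Set G) : Prop :=
  ∃ F ∈ 𝓕, A ⊆ F

/-- Image of `S × A` under a left action `sL`. -/
def lSet {G X : Type*} (sL : G → X → X) (S : Set G) (A : Set X) : Set X :=
  {y | ∃ g ∈ S, ∃ a ∈ A, y = sL g a}

/-- Image of `A × K` under a right action `sR`. -/
def rSet {H X : Type*} (sR : X → H → X) (A : Set X) (K : Set H) : Set X :=
  {y | ∃ a ∈ A, ∃ h ∈ K, y = sR a h}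

/-- `X`, with a left `G`-action `sL` and a right `H`-action `sR` which commute,
together with `O ⊆ X`, is a set theoretic coupling for `(G, λ_𝓕)` and
`(H, λ_𝓛)`. -/
def SetCoupling {G H X : Type*} [Group G] [Group H]
    (𝓕 : Set (Set G)) (𝓛 : Set (Set H))
    (sL : G → X → X) (sR : X → H → X) (O : Set X) : Prop :=
  -- left group action
  (∀ x : X, sL 1 x = x) ∧
  (∀ (g₁ g₂ : G) (x : X), sL (g₁ * g₂) x = sL g₁ (sL g₂ x)) ∧
  -- right group action
  (∀ x : X, sR x 1 = x) ∧
  (∀ (x : X) (h₁ h₂ : H), sR x (h₁ * h₂) = sR (sR x h₁) h₂) ∧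
  -- the actions commute
  (∀ (g : G) (x : X) (h : H), sL g (sR x h) = sR (sL g x) h) ∧
  -- (i) GO = OH = X
  lSet sL Set.univ O = Set.univ ∧ rSet sR O Set.univ = Set.univ ∧
  -- (ii)
  (∀ F : Set G, ∀ K : Set H, InHat 𝓕 F → InHat 𝓛 K →
    InHat 𝓕 {g : G | (lSet sL {g} (rSet sR O K) ∩ rSet sR O K).Nonempty} ∧
    InHat 𝓛 {h : H | (rSet sR (lSet sL F O) {h} ∩ lSet sL F O).Nonempty}) ∧
  -- (iii)
  (∀ F ∈ 𝓕, ∃ E ∈ 𝓛, lSet sL F O ⊆ rSet sR O E) ∧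
  (∀ K ∈ 𝓛, ∃ E ∈ 𝓕, rSet sR O K ⊆ lSet sL E O)

/-- An AS.R mapping: preimages of bounded sets are bounded and asymptotically
alike sets map to asymptotically alike sets. -/
def ASRMap {G H : Type*} [Group G] [Group H]
    (𝓕 : Set (Set G)) (𝓛 : Set (Set H)) (f : G → H) : Prop :=
  (∀ D : Set H, InHat 𝓛 D → InHat 𝓕 (f ⁻¹' D)) ∧
  ∀ A B : Set G, lam 𝓕 A B → lam 𝓛 (f '' A) (f '' B)

/-- If two groups with generating families admit a set theoretic coupling, then
they are asymptotically equivalent. -/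
theorem setCoupling_asympEquiv {G H X : Type*} [Group G] [Group H] [Nonempty X]
    (𝓕 : Set (Set G)) (𝓛 : Set (Set H)) (h𝓕 : GenFam 𝓕) (h𝓛 : GenFam 𝓛)
    (sL : G → X → X) (sR : X → H → X) (O : Set X)
    (hcoup : SetCoupling 𝓕 𝓛 sL sR O) :
    ∃ (f : G → H) (f' : H → G), ASRMap 𝓕 𝓛 f ∧ ASRMap 𝓛 𝓕 f' ∧
      (∀ A : Set G, lam 𝓕 (f' '' (f '' A)) A) ∧
      (∀ B : Set H, lam 𝓛 (f '' (f' '' B)) B) := by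
  
  classical
  obtain ⟨hL1, hLmul, hR1, hRmul, hC, hGO, hOH, hii, hiiiG, hiiiH⟩ := hcoup
  obtain ⟨⟨A𝓕, hA𝓕, a𝓕, ha𝓕⟩, hUn𝓕, hMul𝓕, hInv𝓕, hCov𝓕⟩ := h𝓕
  obtain ⟨⟨A𝓛, hA𝓛, a𝓛, ha𝓛⟩, hUn𝓛, hMul𝓛, hInv𝓛, hCov𝓛⟩ := h𝓛
  -- elementary action facts
  have hLinj : ∀ (g : G) (x y : X), sL g x = sL g y → x = y := by
    intro g x y hxy
    have h1 : sL g⁻¹ (sL g x) = sL g⁻¹ (sL g y) := by rw [hxy]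
    rwa [← hLmul, ← hLmul, inv_mul_cancel, hL1, hL1] at h1
  -- a member of 𝓕 containing 1, likewise for 𝓛
  have hF₀ : A𝓕 * A𝓕⁻¹ ∈ 𝓕 := hMul𝓕 _ hA𝓕 _ (hInv𝓕 _ hA𝓕)
  have h1F₀ : (1 : G) ∈ A𝓕 * A𝓕⁻¹ := by
    have := Set.mul_mem_mul ha𝓕 (Set.inv_mem_inv.mpr ha𝓕)
    rwa [mul_inv_cancel] at this
  set F₀ := A𝓕 * A𝓕⁻¹ with hF₀def
  have hK₀ : A𝓛 * A𝓛⁻¹ ∈ 𝓛 := hMul𝓛 _ hA𝓛 _ (hInv𝓛 _ hA𝓛)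
  have h1K₀ : (1 : H) ∈ A𝓛 * A𝓛⁻¹ := by
    have := Set.mul_mem_mul ha𝓛 (Set.inv_mem_inv.mpr ha𝓛)
    rwa [mul_inv_cancel] at this
  set K₀ := A𝓛 * A𝓛⁻¹ with hK₀def
  -- a base point in O
  have hOne : ∃ x₀ : X, x₀ ∈ O := by
    have hx : (Classical.arbitrary X) ∈ rSet sR O Set.univ := by
      rw [hOH]; exact Set.mem_univ _
    obtain ⟨o, ho, -, -, -⟩ := hx
    exact ⟨o, ho⟩
  obtain ⟨x₀, hx₀⟩ := hOne
  -- monotonicity of InHat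
  have hatMono𝓕 : ∀ S T : Set G, S ⊆ T → InHat 𝓕 T → InHat 𝓕 S := by
    rintro S T hst ⟨F, hF, hTF⟩; exact ⟨F, hF, hst.trans hTF⟩
  have hatMono𝓛 : ∀ S T : Set H, S ⊆ T → InHat 𝓛 T → InHat 𝓛 S := by
    rintro S T hst ⟨F, hF, hTF⟩; exact ⟨F, hF, hst.trans hTF⟩
  -- Primitive boundedness 1 : if gO meets OK with K bounded then g is bounded
  have P1 : ∀ K : Set H, InHat 𝓛 K →
      InHat 𝓕 {g : G | ∃ o ∈ O, ∃ o' ∈ O, ∃ k ∈ K, sL g o = sR o' k} := by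
    rintro K ⟨K₁, hK₁, hKK₁⟩
    have hKhat : K₁ ∪ K₀ ∈ 𝓛 := hUn𝓛 _ hK₁ _ hK₀
    have h2 := (hii F₀ (K₁ ∪ K₀) ⟨F₀, hF₀, subset_rfl⟩ ⟨K₁ ∪ K₀, hKhat, subset_rfl⟩).1
    refine hatMono𝓕 _ _ ?_ h2
    rintro g ⟨o, ho, o', ho', k, hk, heq⟩
    refine ⟨sL g o, ⟨g, rfl, o, ⟨o, ho, 1, Or.inr h1K₀, (hR1 o).symm⟩, rfl⟩, ?_⟩
    exact ⟨o', ho', k, Or.inl (hKK₁ hk), heq⟩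
  -- Primitive boundedness 2 : if Oh meets FO with F bounded then h is bounded
  have P2 : ∀ F : Set G, InHat 𝓕 F →
      InHat 𝓛 {h : H | ∃ o ∈ O, ∃ o' ∈ O, ∃ w ∈ F, sR o h = sL w o'} := by
    rintro F ⟨F₁, hF₁, hFF₁⟩
    have hFhat : F₁ ∪ F₀ ∈ 𝓕 := hUn𝓕 _ hF₁ _ hF₀
    have h2 := (hii (F₁ ∪ F₀) K₀ ⟨F₁ ∪ F₀, hFhat, subset_rfl⟩ ⟨K₀, hK₀, subset_rfl⟩).2
    refine hatMono𝓛 _ _ ?_ h2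
    rintro h ⟨o, ho, o', ho', w, hw, heq⟩
    refine ⟨sR o h, ⟨o, ⟨1, Or.inr h1F₀, o, ho, (hL1 o).symm⟩, h, rfl, rfl⟩, ?_⟩
    exact ⟨w, Or.inl (hFF₁ hw), o', ho', heq⟩
  -- definition of f
  have hfex : ∀ g : G, ∃ h : H, ∃ o ∈ O, sR x₀ h = sL g o := by
    intro g
    have hx : sL g⁻¹ x₀ ∈ rSet sR O Set.univ := by rw [hOH]; exact Set.mem_univ _
    obtain ⟨o, ho, k, -, hk⟩ := hx
    refine ⟨k⁻¹, o, ho, ?_⟩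
    have hx' : x₀ = sR (sL g o) k := by
      rw [← hC, ← hk, ← hLmul, mul_inv_cancel, hL1]
    rw [hx', ← hRmul, mul_inv_cancel, hR1]
  choose f hf using hfex
  -- definition of f'
  have hf'ex : ∀ h : H, ∃ g : G, ∃ o ∈ O, sR x₀ h = sL g o := by
    intro h
    have hx : sR x₀ h ∈ lSet sL Set.univ O := by rw [hGO]; exact Set.mem_univ _
    obtain ⟨g, -, o, ho, heq⟩ := hx
    exact ⟨g, o, ho, heq⟩
  choose f' hf' using hf'ex
  refine ⟨f, f', ⟨?_, ?_⟩, ⟨?_, ?_⟩, ?_, ?_⟩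
  · -- f : preimages of bounded sets are bounded
    rintro D ⟨L₁, hL₁, hDL₁⟩
    obtain ⟨F₂, hF₂, hsub⟩ := P1 L₁⁻¹ ⟨L₁⁻¹, hInv𝓛 _ hL₁, subset_rfl⟩
    refine ⟨F₂⁻¹, hInv𝓕 _ hF₂, ?_⟩
    intro g hg
    obtain ⟨o, ho, heq⟩ := hf g
    have h1 : sL g⁻¹ x₀ = sR o (f g)⁻¹ := by
      have hx' : x₀ = sL g (sR o (f g)⁻¹) := by
        rw [hC, ← heq, ← hRmul, mul_inv_cancel, hR1]
      rw [hx', ← hLmul, inv_mul_cancel, hL1]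
    have h2 : g⁻¹ ∈ F₂ :=
      hsub ⟨x₀, hx₀, o, ho, (f g)⁻¹, Set.inv_mem_inv.mpr (hDL₁ hg), h1⟩
    exact Set.mem_inv.mpr h2
  · -- f preserves λ
    rintro A B ⟨F, hF, hAB, hBA⟩
    obtain ⟨E, hE, hFO⟩ := hiiiG F hF
    obtain ⟨E', hE', hOE⟩ := hiiiH E hE
    obtain ⟨Lst, hLst, hΨ⟩ := P2 E' ⟨E', hE', subset_rfl⟩
    have key : ∀ b u : G, u ∈ F → (f b)⁻¹ * f (b * u) ∈ Lst := by
      intro b u hu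
      obtain ⟨o, ho, heqa⟩ := hf (b * u)
      obtain ⟨o₂, ho₂, heqb⟩ := hf b
      have h1 : sL u o ∈ rSet sR O E := hFO ⟨u, hu, o, ho, rfl⟩
      obtain ⟨ε, hε, o₃, ho₃, h3⟩ := hOE h1
      apply hΨ
      refine ⟨o₂, ho₂, o₃, ho₃, ε, hε, ?_⟩
      apply hLinj b
      calc sL b (sR o₂ ((f b)⁻¹ * f (b * u)))
          = sR (sL b o₂) ((f b)⁻¹ * f (b * u)) := hC b o₂ _
        _ = sR (sR x₀ (f b)) ((f b)⁻¹ * f (b * u)) := by rw [heqb]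
        _ = sR x₀ (f b * ((f b)⁻¹ * f (b * u))) := (hRmul x₀ _ _).symm
        _ = sR x₀ (f (b * u)) := by rw [mul_inv_cancel_left]
        _ = sL (b * u) o := heqa
        _ = sL b (sL u o) := hLmul b u o
        _ = sL b (sL ε o₃) := by rw [h3]
    refine ⟨Lst, hLst, ?_, ?_⟩
    · rintro y ⟨a, ha, rfl⟩
      obtain ⟨b, hb, u, hu, hbu⟩ := Set.mem_mul.mp (hAB ha)
      subst hbu
      rw [← mul_inv_cancel_left (f b) (f (b * u))]
      exact Set.mul_mem_mul (Set.mem_image_of_mem f hb) (key b u hu)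
    · rintro y ⟨b, hb, rfl⟩
      obtain ⟨a, ha, u, hu, hau⟩ := Set.mem_mul.mp (hBA hb)
      subst hau
      rw [← mul_inv_cancel_left (f a) (f (a * u))]
      exact Set.mul_mem_mul (Set.mem_image_of_mem f ha) (key a u hu)
  · -- f' : preimages of bounded sets are bounded
    rintro D ⟨F₁, hF₁, hDF₁⟩
    obtain ⟨E₁, hE₁, hFO₁⟩ := hiiiG F₁ hF₁
    obtain ⟨L₂, hL₂, hΨ₀⟩ := P2 F₀ ⟨F₀, hF₀, subset_rfl⟩
    refine ⟨L₂ * E₁, hMul𝓛 _ hL₂ _ hE₁, ?_⟩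
    intro h hh
    obtain ⟨o, ho, heq⟩ := hf' h
    have h1 : sR x₀ h ∈ rSet sR O E₁ := hFO₁ ⟨f' h, hDF₁ hh, o, ho, heq⟩
    obtain ⟨o', ho', ε, hε, h2⟩ := h1
    have h3 : sR x₀ (h * ε⁻¹) = sL 1 o' := by
      rw [hRmul, h2, ← hRmul, mul_inv_cancel, hR1, hL1]
    have h4 : h * ε⁻¹ ∈ L₂ := hΨ₀ ⟨x₀, hx₀, o', ho', 1, h1F₀, h3⟩
    exact Set.mem_mul.mpr ⟨h * ε⁻¹, h4, ε, hε, inv_mul_cancel_right h ε⟩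
  · -- f' preserves λ
    rintro B B' ⟨K, hK, hBB', hB'B⟩
    obtain ⟨E', hE', hOK⟩ := hiiiH K hK
    obtain ⟨F₂, hF₂, hΦ⟩ := P1 K₀ ⟨K₀, hK₀, subset_rfl⟩
    have key : ∀ h k : H, k ∈ K → (f' h)⁻¹ * f' (h * k) ∈ E' * F₂ := by
      intro h k hk
      obtain ⟨o, ho, heqn⟩ := hf' (h * k)
      obtain ⟨o₂, ho₂, heqh⟩ := hf' h
      have h3 : sR o₂ k ∈ lSet sL E' O := hOK ⟨o₂, ho₂, k, hk, rfl⟩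
      obtain ⟨ε, hε, o₃, ho₃, h4⟩ := h3
      have h5 : sL (f' (h * k)) o = sL (f' h * ε) o₃ := by
        calc sL (f' (h * k)) o = sR x₀ (h * k) := heqn.symm
          _ = sR (sR x₀ h) k := hRmul x₀ h k
          _ = sR (sL (f' h) o₂) k := by rw [heqh]
          _ = sL (f' h) (sR o₂ k) := (hC _ _ _).symm
          _ = sL (f' h) (sL ε o₃) := by rw [h4]
          _ = sL (f' h * ε) o₃ := (hLmul _ _ _).symm
      have h6 : sL ((f' h * ε)⁻¹ * f' (h * k)) o = sR o₃ 1 := by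
        rw [hLmul, h5, ← hLmul, inv_mul_cancel, hL1, hR1]
      have h7 : (f' h * ε)⁻¹ * f' (h * k) ∈ F₂ := hΦ ⟨o, ho, o₃, ho₃, 1, h1K₀, h6⟩
      have h8 : (f' h)⁻¹ * f' (h * k) = ε * ((f' h * ε)⁻¹ * f' (h * k)) := by group
      rw [h8]
      exact Set.mul_mem_mul hε h7
    refine ⟨E' * F₂, hMul𝓕 _ hE' _ hF₂, ?_, ?_⟩
    · rintro y ⟨h, hh, rfl⟩
      obtain ⟨h', hh', k, hk, hhk⟩ := Set.mem_mul.mp (hBB' hh)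
      subst hhk
      rw [← mul_inv_cancel_left (f' h') (f' (h' * k))]
      exact Set.mul_mem_mul (Set.mem_image_of_mem f' hh') (key h' k hk)
    · rintro y ⟨h, hh, rfl⟩
      obtain ⟨h', hh', k, hk, hhk⟩ := Set.mem_mul.mp (hB'B hh)
      subst hhk
      rw [← mul_inv_cancel_left (f' h') (f' (h' * k))]
      exact Set.mul_mem_mul (Set.mem_image_of_mem f' hh') (key h' k hk)
  · -- f' ∘ f is λ-close to the identity
    intro A
    obtain ⟨F₂, hF₂, hΦ⟩ := P1 K₀ ⟨K₀, hK₀, subset_rfl⟩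
    have key : ∀ g : G, (f' (f g))⁻¹ * g ∈ F₂ := by
      intro g
      obtain ⟨o, ho, heq⟩ := hf g
      obtain ⟨o₂, ho₂, heq'⟩ := hf' (f g)
      apply hΦ
      refine ⟨o, ho, o₂, ho₂, 1, h1K₀, ?_⟩
      rw [hLmul, ← heq, heq', ← hLmul, inv_mul_cancel, hL1, hR1]
    refine ⟨F₂ ∪ F₂⁻¹, hUn𝓕 _ hF₂ _ (hInv𝓕 _ hF₂), ?_, ?_⟩
    · rintro y ⟨h, ⟨a, ha, rfl⟩, rfl⟩
      refine Set.mem_mul.mpr ⟨a, ha, ((f' (f a))⁻¹ * a)⁻¹,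
        Or.inr (Set.inv_mem_inv.mpr (key a)), ?_⟩
      group
    · intro a ha
      refine Set.mem_mul.mpr ⟨f' (f a), ⟨f a, ⟨a, ha, rfl⟩, rfl⟩,
        (f' (f a))⁻¹ * a, Or.inl (key a), mul_inv_cancel_left _ _⟩
  · -- f ∘ f' is λ-close to the identity
    intro B
    obtain ⟨L₂, hL₂, hΨ₀⟩ := P2 F₀ ⟨F₀, hF₀, subset_rfl⟩
    have key : ∀ h : H, h⁻¹ * f (f' h) ∈ L₂ := by
      intro h
      obtain ⟨o, ho, heq⟩ := hf' h
      obtain ⟨o', ho', heq'⟩ := hf (f' h)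
      apply hΨ₀
      refine ⟨o, ho, o', ho', 1, h1F₀, ?_⟩
      apply hLinj (f' h)
      calc sL (f' h) (sR o (h⁻¹ * f (f' h)))
          = sR (sL (f' h) o) (h⁻¹ * f (f' h)) := hC _ _ _
        _ = sR (sR x₀ h) (h⁻¹ * f (f' h)) := by rw [heq]
        _ = sR x₀ (h * (h⁻¹ * f (f' h))) := (hRmul _ _ _).symm
        _ = sR x₀ (f (f' h)) := by rw [mul_inv_cancel_left]
        _ = sL (f' h) o' := heq'
        _ = sL (f' h) (sL 1 o') := by rw [hL1]
    refine ⟨L₂ ∪ L₂⁻¹, hUn𝓛 _ hL₂ _ (hInv𝓛 _ hL₂), ?_, ?_⟩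
    · rintro y ⟨g, ⟨h, hh, rfl⟩, rfl⟩
      refine Set.mem_mul.mpr ⟨h, hh, h⁻¹ * f (f' h), Or.inl (key h),
        mul_inv_cancel_left _ _⟩
    · intro h hh
      refine Set.mem_mul.mpr ⟨f (f' h), ⟨f' h, ⟨h, hh, rfl⟩, rfl⟩,
        (h⁻¹ * f (f' h))⁻¹, Or.inr (Set.inv_mem_inv.mpr (key h)), ?_⟩
      group
end

section
/- Let G and H be finitely generated (discrete) groups with 𝓕, 𝓕' the families of finite subsets. Suppose G and H act on a set X from left and right respectively, with commuting actions, and there is O ⊆ X satisfying: (i) GO = OH = X; (ii) F_G = {g : gO ∩ O ≠ ∅} and F_H = {h : Oh ∩ O ≠ ∅} are finite; (iii) for each g ∈ G, h ∈ H there are finite F_H(g) ⊆ H, F_G(h) ⊆ G with gO ⊆ O·F_H(g) and Oh ⊆ F_G(h)·O. Then for every finite L ⊆ H, the set F_G(L) = {g ∈ G : gOL ∩ OL ≠ ∅} is finite (and symmetrically for finite subsets of G), so X is a set theoretic coupling for (G, λ_𝓕) and (H, λ_𝓕'). -/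
open scoped Pointwise

/-- For finitely generated groups with commuting actions on `X` and `O ⊆ X`
satisfying (i) `GO = OH = X`, (ii) `F_G`, `F_H` finite, (iii) `gO ⊆ O F_H(g)`
and `Oh ⊆ F_G(h) O`, the sets `F_G(L)` and `F_H(K)` are finite for all finite
`L ⊆ H`, `K ⊆ G`, and `X` is a set theoretic coupling for `(G, λ_𝓕)` and
`(H, λ_𝓕')` with the families of finite subsets. -/
theorem finite_coupling {G H X : Type*} [Group G] [Group H] [Nonempty X]
    (hGfg : ∃ S : Set G, S.Finite ∧ Subgroup.closure S = ⊤)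
    (hHfg : ∃ S : Set H, S.Finite ∧ Subgroup.closure S = ⊤)
    (sL : G → X → X) (sR : X → H → X) (O : Set X)
    (hL1 : ∀ x : X, sL 1 x = x)
    (hLmul : ∀ (g₁ g₂ : G) (x : X), sL (g₁ * g₂) x = sL g₁ (sL g₂ x))
    (hR1 : ∀ x : X, sR x 1 = x)
    (hRmul : ∀ (x : X) (h₁ h₂ : H), sR x (h₁ * h₂) = sR (sR x h₁) h₂)
    (hcomm : ∀ (g : G) (x : X) (h : H), sL g (sR x h) = sR (sL g x) h)
    (hi : lSet sL Set.univ O = Set.univ ∧ rSet sR O Set.univ = Set.univ)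
    (hii : {g : G | (lSet sL {g} O ∩ O).Nonempty}.Finite ∧
           {h : H | (rSet sR O {h} ∩ O).Nonempty}.Finite)
    (hiii : (∀ g : G, ∃ K : Set H, K.Finite ∧ lSet sL {g} O ⊆ rSet sR O K) ∧
            (∀ h : H, ∃ F : Set G, F.Finite ∧ rSet sR O {h} ⊆ lSet sL F O)) :
    (∀ L : Set H, L.Finite →
      {g : G | (lSet sL {g} (rSet sR O L) ∩ rSet sR O L).Nonempty}.Finite) ∧
    (∀ K : Set G, K.Finite →
      {h : H | (rSet sR (lSet sL K O) {h} ∩ lSet sL K O).Nonempty}.Finite) ∧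
    SetCoupling {S : Set G | S.Finite} {S : Set H | S.Finite} sL sR O := by
  obtain ⟨hGO, hOH⟩ := hi
  obtain ⟨hFG, hFH⟩ := hii
  obtain ⟨hKh0, hFg0⟩ := hiii
  choose Kh KhFin hKhsub using hKh0
  choose Fg FgFin hFgsub using hFg0
  -- monotonicity lemmas
  have rMonoK : ∀ (A : Set X) (K K' : Set H), K ⊆ K' → rSet sR A K ⊆ rSet sR A K' := by
    rintro A K K' hKK' x ⟨a, ha, h, hh, rfl⟩
    exact ⟨a, ha, h, hKK' hh, rfl⟩
  have lMonoA : ∀ (S : Set G) (A A' : Set X), A ⊆ A' → lSet sL S A ⊆ lSet sL S A' := by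
    rintro S A A' hAA' x ⟨g, hg, a, ha, rfl⟩
    exact ⟨g, hg, a, hAA' ha, rfl⟩
  have lMonoS : ∀ (S S' : Set G) (A : Set X), S ⊆ S' → lSet sL S A ⊆ lSet sL S' A := by
    rintro S S' A hSS' x ⟨g, hg, a, ha, rfl⟩
    exact ⟨g, hSS' hg, a, ha, rfl⟩
  have rMonoA : ∀ (A A' : Set X) (K : Set H), A ⊆ A' → rSet sR A K ⊆ rSet sR A' K := by
    rintro A A' K hAA' x ⟨a, ha, h, hh, rfl⟩
    exact ⟨a, hAA' ha, h, hh, rfl⟩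
  -- Part 1
  have part1 : ∀ L : Set H, L.Finite →
      {g : G | (lSet sL {g} (rSet sR O L) ∩ rSet sR O L).Nonempty}.Finite := by
    intro L hLfin
    have hDfin : (⋃ h ∈ L, Fg h).Finite := hLfin.biUnion fun h _ => FgFin h
    have hsub : {g : G | (lSet sL {g} (rSet sR O L) ∩ rSet sR O L).Nonempty}
        ⊆ (⋃ h ∈ L, Fg h) * {g : G | (lSet sL {g} O ∩ O).Nonempty} * (⋃ h ∈ L, Fg h)⁻¹ := by
      rintro g ⟨x, hx1, hx2⟩
      obtain ⟨g', hg', a, ha, hxa⟩ := hx1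
      rw [Set.mem_singleton_iff] at hg'; rw [hg'] at hxa; clear hg'
      obtain ⟨o1, ho1, h1, hh1, rfl⟩ := ha
      obtain ⟨o2, ho2, h2, hh2, hx2'⟩ := hx2
      obtain ⟨d1, hd1, o1', ho1', heq1⟩ := hFgsub h1 ⟨o1, ho1, h1, rfl, rfl⟩
      obtain ⟨d2, hd2, o2', ho2', heq2⟩ := hFgsub h2 ⟨o2, ho2, h2, rfl, rfl⟩
      have e0 : sL g (sL d1 o1') = sL d2 o2' := by
        rw [← heq1, ← heq2, ← hx2', hxa]
      have key : sL (d2⁻¹ * (g * d1)) o1' = o2' := by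
        rw [hLmul, hLmul, e0, ← hLmul, inv_mul_cancel, hL1]
      have hc : d2⁻¹ * (g * d1) ∈ {g : G | (lSet sL {g} O ∩ O).Nonempty} :=
        ⟨o2', ⟨d2⁻¹ * (g * d1), rfl, o1', ho1', key.symm⟩, ho2'⟩
      have hgeq : g = d2 * (d2⁻¹ * (g * d1)) * d1⁻¹ := by group
      rw [hgeq]
      exact Set.mul_mem_mul (Set.mul_mem_mul (Set.mem_biUnion hh2 hd2) hc)
        (Set.inv_mem_inv.mpr (Set.mem_biUnion hh1 hd1))
    exact ((hDfin.mul hFG).mul hDfin.inv).subset hsub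
  -- Part 2
  have part2 : ∀ K : Set G, K.Finite →
      {h : H | (rSet sR (lSet sL K O) {h} ∩ lSet sL K O).Nonempty}.Finite := by
    intro K hKfin
    have hEfin : (⋃ g ∈ K, Kh g).Finite := hKfin.biUnion fun g _ => KhFin g
    have hsub : {h : H | (rSet sR (lSet sL K O) {h} ∩ lSet sL K O).Nonempty}
        ⊆ (⋃ g ∈ K, Kh g)⁻¹ * {h : H | (rSet sR O {h} ∩ O).Nonempty} * (⋃ g ∈ K, Kh g) := by
      rintro h ⟨x, hx1, hx2⟩
      obtain ⟨a, ha, h', hh', hxa⟩ := hx1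
      rw [Set.mem_singleton_iff] at hh'; rw [hh'] at hxa; clear hh'
      obtain ⟨g1, hg1, o1, ho1, rfl⟩ := ha
      obtain ⟨g2, hg2, o2, ho2, hx2'⟩ := hx2
      obtain ⟨o1', ho1', e1, he1, heq1⟩ := hKhsub g1 ⟨g1, rfl, o1, ho1, rfl⟩
      obtain ⟨o2', ho2', e2, he2, heq2⟩ := hKhsub g2 ⟨g2, rfl, o2, ho2, rfl⟩
      have e0 : sR (sR o1' e1) h = sR o2' e2 := by
        rw [← heq1, ← heq2, ← hx2', hxa]
      have key : sR o1' (e1 * h * e2⁻¹) = o2' := by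
        rw [hRmul, hRmul, e0, ← hRmul, mul_inv_cancel, hR1]
      have hc : e1 * h * e2⁻¹ ∈ {h : H | (rSet sR O {h} ∩ O).Nonempty} :=
        ⟨o2', ⟨o1', ho1', e1 * h * e2⁻¹, rfl, key.symm⟩, ho2'⟩
      have hheq : h = e1⁻¹ * (e1 * h * e2⁻¹) * e2 := by group
      rw [hheq]
      exact Set.mul_mem_mul (Set.mul_mem_mul (Set.inv_mem_inv.mpr (Set.mem_biUnion hg1 he1)) hc) (Set.mem_biUnion hg2 he2)
    exact ((hEfin.inv.mul hFH).mul hEfin).subset hsub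
  refine ⟨part1, part2, hL1, hLmul, hR1, hRmul, hcomm, hGO, hOH, ?_, ?_, ?_⟩
  · rintro F K ⟨F', hF', hFsub⟩ ⟨K', hK', hKsub⟩
    constructor
    · refine ⟨_, part1 K' hK', ?_⟩
      rintro g ⟨x, hxa, hxb⟩
      exact ⟨x, lMonoA _ _ _ (rMonoK O _ _ hKsub) hxa, rMonoK O _ _ hKsub hxb⟩
    · refine ⟨_, part2 F' hF', ?_⟩
      rintro h ⟨x, hxa, hxb⟩
      exact ⟨x, rMonoA _ _ _ (lMonoS _ _ _ hFsub) hxa, lMonoS _ _ _ hFsub hxb⟩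
  · intro F hF
    refine ⟨⋃ g ∈ F, Kh g, hF.biUnion fun g _ => KhFin g, ?_⟩
    rintro x ⟨g, hg, o, ho, rfl⟩
    obtain ⟨o', ho', e, he, heq⟩ := hKhsub g ⟨g, rfl, o, ho, rfl⟩
    exact ⟨o', ho', e, Set.mem_biUnion hg he, heq⟩
  · intro K hK
    refine ⟨⋃ h ∈ K, Fg h, hK.biUnion fun h _ => FgFin h, ?_⟩
    rintro x ⟨o, ho, h, hh, rfl⟩
    obtain ⟨d, hd, o', ho', heq⟩ := hFgsub h ⟨o, ho, h, rfl, rfl⟩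
    exact ⟨d, Set.mem_biUnion hh hd, o', ho', heq⟩
end
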